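/- The furtherness function on a finite topological space satisfies the triangle inequality: Ψ(x,y) ≤ Ψ(x,z) + Ψ(z,y) for all x, y, z. -/

import Mathlib

open Set Topology

def minOpen (X : Type*) [TopologicalSpace X] (x : X) : Set X :=
  ⋂₀ {U : Set X | IsOpen U ∧ x ∈ U}

def NestedSeq (X : Type*) [TopologicalSpace X] (x : X) (c : ℕ → Set X) : Prop :=
  c 0 = minOpen X x ∧ (∀ j, IsOpen (c j)) ∧
  (∀ j, c j ⊆ c (j + 1)) ∧
  (∀ j, c j ≠ c (j + 1) ∨ c j = Set.univ) ∧
  (∀ j, ∀ V : Set X, IsOpen V → c j ⊆ V → V ⊆ c (j + 1) → V = c j ∨ V = c (j + 1))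

noncomputable def furth (X : Type*) [TopologicalSpace X] (x y : X) : ℕ :=
  sInf {k | ∃ c : ℕ → Set X, NestedSeq X x c ∧ y ∈ c k}

section Aux

variable {X : Type*} [TopologicalSpace X] [Finite X]

lemma isOpen_minOpen (x : X) : IsOpen (minOpen X x) := by
  apply Set.Finite.isOpen_sInter (Set.toFinite _)
  intro U hU; exact hU.1

lemma mem_minOpen (x : X) : x ∈ minOpen X x := by
  intro U hU; exact hU.2

lemma minOpen_subset {x : X} {U : Set X} (hU : IsOpen U) (hx : x ∈ U) :
    minOpen X x ⊆ U :=
  sInter_subset_of_mem ⟨hU, hx⟩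

/-- General chain predicate (starting at an arbitrary open set `U`). -/
def OChain (U : Set X) (c : ℕ → Set X) : Prop :=
  c 0 = U ∧ (∀ j, IsOpen (c j)) ∧
  (∀ j, c j ⊆ c (j + 1)) ∧
  (∀ j, c j ≠ c (j + 1) ∨ c j = Set.univ) ∧
  (∀ j, ∀ V : Set X, IsOpen V → c j ⊆ V → V ⊆ c (j + 1) → V = c j ∨ V = c (j + 1))

noncomputable def rho (U : Set X) (y : X) : ℕ :=
  sInf {k | ∃ c : ℕ → Set X, OChain U c ∧ y ∈ c k}

lemma furth_eq_rho (x y : X) : furth X x y = rho (minOpen X x) y := rfl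

lemma step_exists {U : Set X} (hU : IsOpen U) :
    ∃ V, IsOpen V ∧ U ⊆ V ∧ (U ≠ V ∨ U = Set.univ) ∧
      ∀ W, IsOpen W → U ⊆ W → W ⊆ V → W = U ∨ W = V := by
  by_cases h : U = Set.univ
  · refine ⟨Set.univ, isOpen_univ, subset_univ _, Or.inr h, ?_⟩
    intro W _ hUW hWV
    right
    apply subset_antisymm hWV
    rw [h] at hUW; exact hUW
  · obtain ⟨V, hVmem, hVmin⟩ := Set.Finite.exists_minimalFor id
      {V : Set X | IsOpen V ∧ U ⊂ V} (Set.toFinite _)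
      ⟨Set.univ, isOpen_univ, ssubset_univ_iff.mpr h⟩
    refine ⟨V, hVmem.1, hVmem.2.subset, Or.inl (ne_of_ssubset hVmem.2), ?_⟩
    intro W hW hUW hWV
    rcases eq_or_ne W U with h' | h'
    · exact Or.inl h'
    · exact Or.inr (subset_antisymm hWV (hVmin ⟨hW, ssubset_of_subset_of_ne hUW h'.symm⟩ hWV))

lemma step_exists' (U : Set X) :
    ∃ V, IsOpen U → (IsOpen V ∧ U ⊆ V ∧ (U ≠ V ∨ U = Set.univ) ∧
      ∀ W, IsOpen W → U ⊆ W → W ⊆ V → W = U ∨ W = V) := by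
  by_cases h : IsOpen U
  · obtain ⟨V, hV⟩ := step_exists h
    exact ⟨V, fun _ => hV⟩
  · exact ⟨Set.univ, fun h' => absurd h' h⟩

noncomputable def nextOpen (U : Set X) : Set X := (step_exists' U).choose

lemma nextOpen_spec {U : Set X} (hU : IsOpen U) :
    IsOpen (nextOpen U) ∧ U ⊆ nextOpen U ∧ (U ≠ nextOpen U ∨ U = Set.univ) ∧
      ∀ W, IsOpen W → U ⊆ W → W ⊆ nextOpen U → W = U ∨ W = nextOpen U :=
  (step_exists' U).choose_spec hU

lemma chain_exists {U : Set X} (hU : IsOpen U) :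
    ∃ c : ℕ → Set X, OChain U c ∧ ∃ N, c N = Set.univ := by
  set c : ℕ → Set X := fun n => nextOpen^[n] U with hcdef
  have hsucc : ∀ n, c (n + 1) = nextOpen (c n) := fun n =>
    Function.iterate_succ_apply' _ _ _
  have hopen : ∀ n, IsOpen (c n) := by
    intro n
    induction n with
    | zero => exact hU
    | succ n ih => rw [hsucc]; exact (nextOpen_spec ih).1
  have hchain : OChain U c := by
    refine ⟨rfl, hopen, ?_, ?_, ?_⟩
    · intro j; rw [hsucc]; exact (nextOpen_spec (hopen j)).2.1
    · intro j; rw [hsucc]; exact (nextOpen_spec (hopen j)).2.2.1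
    · intro j V hV h1 h2
      rw [hsucc] at h2
      rcases (nextOpen_spec (hopen j)).2.2.2 V hV h1 h2 with h | h
      · exact Or.inl h
      · right; rw [hsucc]; exact h
  refine ⟨c, hchain, ?_⟩
  by_contra hcon
  push_neg at hcon
  have hlt : ∀ n, c n < c (n + 1) := by
    intro n
    refine lt_of_le_of_ne (hchain.2.2.1 n) ?_
    rcases hchain.2.2.2.1 n with h | h
    · exact h
    · exact absurd h (hcon n)
  have hmono : StrictMono c := strictMono_nat_of_lt_succ hlt
  have : Finite ℕ := Finite.of_injective c hmono.injective
  exact not_finite ℕ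

lemma rho_set_nonempty {U : Set X} (hU : IsOpen U) (y : X) :
    {k | ∃ c : ℕ → Set X, OChain U c ∧ y ∈ c k}.Nonempty := by
  obtain ⟨c, hc, N, hN⟩ := chain_exists hU
  exact ⟨N, c, hc, by rw [hN]; trivial⟩

lemma rho_spec {U : Set X} (hU : IsOpen U) (y : X) :
    ∃ c : ℕ → Set X, OChain U c ∧ y ∈ c (rho U y) :=
  Nat.sInf_mem (rho_set_nonempty hU y)

lemma rho_le_succ {U V : Set X} (hU : IsOpen U) (hV : IsOpen V) (hUV : U ⊆ V)
    (hne : U ≠ V ∨ U = Set.univ)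
    (hmax : ∀ W, IsOpen W → U ⊆ W → W ⊆ V → W = U ∨ W = V) (y : X) :
    rho U y ≤ rho V y + 1 := by
  obtain ⟨d, hd, hyd⟩ := rho_spec hV y
  obtain ⟨hd0, hdopen, hdsub, hdne, hdmax⟩ := hd
  set e : ℕ → Set X := fun j => Nat.casesOn j U (fun k => d k) with hedef
  have he1 : e 1 = d 0 := rfl
  have he : OChain U e := by
    refine ⟨rfl, ?_, ?_, ?_, ?_⟩
    · intro j; cases j with
      | zero => exact hU
      | succ j => exact hdopen j
    · intro j; cases j with
      | zero => show U ⊆ d 0; rw [hd0]; exact hUV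
      | succ j => exact hdsub j
    · intro j; cases j with
      | zero =>
        rcases hne with h | h
        · left; show U ≠ d 0; rw [hd0]; exact h
        · exact Or.inr h
      | succ j => exact hdne j
    · intro j W hW h1 h2
      cases j with
      | zero =>
        have h2' : W ⊆ V := by
          have : W ⊆ d 0 := h2
          rwa [hd0] at this
        rcases hmax W hW h1 h2' with h | h
        · exact Or.inl h
        · exact Or.inr (show W = d 0 from h.trans hd0.symm)
      | succ j => exact hdmax j W hW h1 h2
  exact Nat.sInf_le ⟨e, he, hyd⟩

lemma rho_le_add {U : Set X} {c : ℕ → Set X} (hc : OChain U c) (y : X) :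
    ∀ m, rho U y ≤ m + rho (c m) y := by
  obtain ⟨hc0, hcopen, hcsub, hcne, hcmax⟩ := hc
  intro m
  induction m with
  | zero => rw [hc0.symm, zero_add]
  | succ m ih =>
    have hstep : rho (c m) y ≤ rho (c (m + 1)) y + 1 :=
      rho_le_succ (hcopen m) (hcopen (m + 1)) (hcsub m) (hcne m)
        (hcmax m) y
    omega

lemma rho_mono (y : X) :
    ∀ n : ℕ, ∀ U W : Set X, IsOpen U → IsOpen W → U ⊆ W →
      rho U y ≤ n → rho W y ≤ n := by
  intro n
  induction n with
  | zero =>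
    intro U W hU hW hUW h
    obtain ⟨c, hc, hyc⟩ := rho_spec hU y
    rw [Nat.le_zero] at h
    rw [h] at hyc
    have hyU : y ∈ U := hc.1 ▸ hyc
    obtain ⟨d, hd, _⟩ := chain_exists hW
    have : rho W y ≤ 0 := Nat.sInf_le ⟨d, hd, by rw [hd.1]; exact hUW hyU⟩
    exact this
  | succ n ih =>
    intro U W hU hW hUW h
    rcases le_or_gt (rho U y) n with h' | h'
    · exact (ih U W hU hW hUW h').trans (Nat.le_succ n)
    have heq : rho U y = n + 1 := le_antisymm h h'
    obtain ⟨c, hc, hyc⟩ := rho_spec hU y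
    rw [heq] at hyc
    obtain ⟨hc0, hcopen, hcsub, hcne, hcmax⟩ := hc
    have htail : OChain (c 1) (fun j => c (j + 1)) :=
      ⟨rfl, fun j => hcopen _, fun j => hcsub _, fun j => hcne _,
        fun j => hcmax _⟩
    have h1 : rho (c 1) y ≤ n := Nat.sInf_le ⟨_, htail, hyc⟩
    by_cases hsub : c 1 ⊆ W
    · exact (ih (c 1) W (hcopen 1) hW hsub h1).trans (Nat.le_succ n)
    · set W' := W ∪ c 1 with hW'def
      have hW' : IsOpen W' := hW.union (hcopen 1)
      have hWW' : W ⊆ W' := subset_union_left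
      have hne : W ≠ W' := by
        intro hEq
        exact hsub (hEq ▸ subset_union_right)
      have hmax : ∀ T, IsOpen T → W ⊆ T → T ⊆ W' → T = W ∨ T = W' := by
        intro T hT hWT hTW'
        have hUc1 : U ⊆ c 1 := hc0 ▸ hcsub 0
        have hUT : U ⊆ T := hUW.trans hWT
        have hc0sub : c 0 ⊆ T ∩ c 1 := by
          rw [hc0]; exact subset_inter hUT hUc1
        rcases hcmax 0 (T ∩ c 1) (hT.inter (hcopen 1)) hc0sub
            inter_subset_right with h'' | h''
        · -- T ∩ c 1 = c 0 = U, so T ⊆ W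
          left
          apply subset_antisymm _ hWT
          intro t ht
          rcases hTW' ht with htW | htc
          · exact htW
          · have : t ∈ T ∩ c 1 := ⟨ht, htc⟩
            rw [h'', hc0] at this
            exact hUW this
        · -- T ∩ c 1 = c 1, so c 1 ⊆ T, T = W'
          right
          apply subset_antisymm hTW'
          have hc1T : c 1 ⊆ T := by
            rw [← h'']; exact inter_subset_left
          exact union_subset hWT hc1T
      have hstep : rho W y ≤ rho W' y + 1 :=
        rho_le_succ hW hW' hWW' (Or.inl hne) hmax y
      have hW'le : rho W' y ≤ n :=
        ih (c 1) W' (hcopen 1) hW' subset_union_right h1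
      omega

end Aux

theorem stmt6 (X : Type*) [TopologicalSpace X] [Finite X] (x y z : X) :
    furth X x y ≤ furth X x z + furth X z y := by
  have hx := isOpen_minOpen (X := X) x
  have hz := isOpen_minOpen (X := X) z
  obtain ⟨c, hc, hzc⟩ := rho_spec hx z
  have hcm_open : IsOpen (c (rho (minOpen X x) z)) := hc.2.1 _
  have h1 : rho (minOpen X x) y ≤
      rho (minOpen X x) z + rho (c (rho (minOpen X x) z)) y :=
    rho_le_add hc y _
  have hsub : minOpen X z ⊆ c (rho (minOpen X x) z) :=
    minOpen_subset hcm_open hzc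
  have h2 : rho (c (rho (minOpen X x) z)) y ≤ rho (minOpen X z) y :=
    rho_mono y (rho (minOpen X z) y) _ _ hz hcm_open hsub le_rfl
  have e1 : furth X x y = rho (minOpen X x) y := rfl
  have e2 : furth X x z = rho (minOpen X x) z := rfl
  have e3 : furth X z y = rho (minOpen X z) y := rfl
  rw [e1, e2, e3]
  omega
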